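/- arXiv:2507.11146 — 5 statements merged into one kernel-verified Lean document; each statement's English description precedes it below -/
import Mathlib

section
/- Over the two-letter alphabet Σ = {0,1}, let S = {0}{0}Σ* ∪ {1}Σ* and B = {0}{0}Σ* ∪ {1}·({1}Σ)*·{0}·Σ*. Then every deterministic finite automaton over Σ with finitely many states whose accepted language is a failure explanation for S and B has at least 3 states. -/
/-- `L` is a failure explanation for `S` and `B`. -/
def IsFE {α : Type} (S B L : Set (List α)) : Prop := B ⊆ L ∧ L ∩ (S \ B) = ∅

/-- Words over `{0,1}` that are concatenations of length-two blocks each beginning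
with `1` — the language `({1}·Σ)*`. -/
inductive Blocks : List (Fin 2) → Prop
  | nil : Blocks []
  | cons (a : Fin 2) (w : List (Fin 2)) : Blocks w → Blocks (1 :: a :: w)

/-- Words over `{0,1}` that are concatenations of length-two blocks each ending
with `1` — the language `(Σ·{1})*`. -/
inductive EndBlocks : List (Fin 2) → Prop
  | nil : EndBlocks []
  | cons (a : Fin 2) (w : List (Fin 2)) : EndBlocks w → EndBlocks (a :: 1 :: w)

/-- `S = 00Σ* ∪ 1Σ*`. -/
def Sl : Set (List (Fin 2)) :=
  {x | (∃ u, x = 0 :: 0 :: u) ∨ (∃ u, x = 1 :: u)}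

/-- `B = 00Σ* ∪ 1·(1Σ)*·0·Σ*`. -/
def Bl : Set (List (Fin 2)) :=
  {x | (∃ u, x = 0 :: 0 :: u) ∨ (∃ u v, Blocks u ∧ x = 1 :: (u ++ 0 :: v))}

/-- Every DFA whose language is a failure explanation for `S` and `B` has at
least 3 states. -/
theorem stmt10 (σ : Type) [Fintype σ] (M : DFA (Fin 2) σ)
    (h : IsFE Sl Bl {w | w ∈ M.accepts}) : 3 ≤ Fintype.card σ := by

  obtain ⟨hB, hSB⟩ := h
  have acc : ∀ w, w ∈ Bl → M.eval w ∈ M.accept := fun w hw => (DFA.mem_accepts M).mp (hB hw)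
  have rej : ∀ w, w ∈ Sl → w ∉ Bl → M.eval w ∉ M.accept := by
    intro w hS hnB hacc
    have hm : w ∈ {w | w ∈ M.accepts} ∩ (Sl \ Bl) :=
      ⟨(DFA.mem_accepts M).mpr hacc, hS, hnB⟩
    rw [hSB] at hm
    exact hm
  have h10 : ([1,0] : List (Fin 2)) ∈ Bl := Or.inr ⟨[], [], Blocks.nil, rfl⟩
  have h001 : ([0,0,1] : List (Fin 2)) ∈ Bl := Or.inl ⟨[1], rfl⟩
  have n1 : ([1] : List (Fin 2)) ∉ Bl := by
    rintro (⟨u, hu⟩ | ⟨u, v, hb, hu⟩)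
    · simp at hu
    · cases hb <;> simp_all
  have n11 : ([1,1] : List (Fin 2)) ∉ Bl := by
    rintro (⟨u, hu⟩ | ⟨u, v, hb, hu⟩)
    · simp at hu
    · cases hb <;> simp_all
  have n110 : ([1,1,0] : List (Fin 2)) ∉ Bl := by
    rintro (⟨u, hu⟩ | ⟨u, v, hb, hu⟩)
    · simp at hu
    · cases hb <;> simp_all
  have r1 : M.eval [1] ∉ M.accept := rej [1] (Or.inr ⟨[], rfl⟩) n1
  have r11 : M.eval [1,1] ∉ M.accept := rej [1,1] (Or.inr ⟨[1], rfl⟩) n11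
  have r110 : M.eval [1,1,0] ∉ M.accept := rej [1,1,0] (Or.inr ⟨[1,0], rfl⟩) n110
  have a10 := acc _ h10
  have a001 := acc _ h001
  set q1 := M.step M.start 1 with hq1
  set q00 := M.step (M.step M.start 0) 0 with hq00
  have ev1 : M.eval [1] = q1 := rfl
  have ev11 : M.eval [1,1] = M.step q1 1 := rfl
  have ev110 : M.eval [1,1,0] = M.step (M.step q1 1) 0 := rfl
  have ev10 : M.eval [1,0] = M.step q1 0 := rfl
  have ev001 : M.eval [0,0,1] = M.step q00 1 := rfl
  have d1 : M.start ≠ q1 := by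
    intro e
    apply r110
    rw [ev110, ← e, ← hq1]
    rw [ev10] at a10
    exact a10
  have d2 : M.start ≠ q00 := by
    intro e
    apply r1
    have : M.eval [1] = M.step M.start 1 := rfl
    rw [this, e]
    rw [ev001] at a001
    exact a001
  have d3 : q1 ≠ q00 := by
    intro e
    apply r11
    rw [ev11, e]
    rw [ev001] at a001
    exact a001
  exact Fintype.two_lt_card_iff.mpr ⟨M.start, q1, q00, d1, d2, d3⟩
end

section
/- Over the two-letter alphabet Σ = {0,1}, let S = {0}{0}Σ* ∪ {1}Σ* and B = {0}{0}Σ* ∪ {1}·({1}Σ)*·{0}·Σ*. Then every deterministic finite automaton over Σ with finitely many states whose accepted language is an early detection failure explanation for S and B has at least 4 states. -/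
/-- `Pref L` is the set of prefixes of words of `L`. -/
def Pref {α : Type} (L : Set (List α)) : Set (List α) := {w | ∃ u, w ++ u ∈ L}

/-- `L` is an early detection failure explanation for `S` and `B`. -/
def IsEDFE {α : Type} (S B L : Set (List α)) : Prop :=
  IsFE S B L ∧ ∀ w, w ∈ Pref B → w ∉ Pref (S \ B) → w ∈ L

lemma blocks_ne1 (u v : List (Fin 2)) (hb : Blocks u) : u ++ 0 :: v ≠ [] := by
  rcases hb with _ | ⟨a, w, hw⟩ <;> intro h <;> simp_all

lemma blocks_ne2 (u v : List (Fin 2)) (hb : Blocks u) : u ++ 0 :: v ≠ [1] := by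
  rcases hb with _ | ⟨a, w, hw⟩ <;> intro h <;> simp_all

lemma blocks_ne3 (u v : List (Fin 2)) (hb : Blocks u) : u ++ 0 :: v ≠ [1, 0, 1, 1] := by
  rcases hb with _ | ⟨a, w, hw⟩
  · simp
  · rcases hw with _ | ⟨b, w', hw'⟩ <;> intro h <;> simp_all

lemma four_distinct {σ : Type} [Fintype σ] (a b c d : σ)
    (hab : a ≠ b) (hac : a ≠ c) (had : a ≠ d) (hbc : b ≠ c) (hbd : b ≠ d)
    (hcd : c ≠ d) : 4 ≤ Fintype.card σ := by
  have : Function.Injective (![a, b, c, d]) := by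
    intro i j hij
    fin_cases i <;> fin_cases j <;> simp_all
  simpa using Fintype.card_le_of_injective _ this

/-- Every DFA whose language is an early detection failure explanation for `S`
and `B` has at least 4 states. -/
theorem stmt12 (σ : Type) [Fintype σ] (M : DFA (Fin 2) σ)
    (h : IsEDFE Sl Bl {w | w ∈ M.accepts}) : 4 ≤ Fintype.card σ := by
  set L : Set (List (Fin 2)) := {w | w ∈ M.accepts} with hL
  obtain ⟨⟨hBL, hdisj⟩, hed⟩ := h
  have hout : ∀ w, w ∈ Sl → w ∉ Bl → w ∉ L := by
    intro w hS hB hw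
    exact Set.eq_empty_iff_forall_notMem.mp hdisj w ⟨hw, hS, hB⟩
  -- forced memberships
  have h0L : ([0] : List (Fin 2)) ∈ L := by
    apply hed
    · exact ⟨[0], Or.inl ⟨[], rfl⟩⟩
    · rintro ⟨u, hu, hB⟩
      rcases hu with ⟨u', hu'⟩ | ⟨u', hu'⟩
      · simp at hu'
        exact hB (Or.inl ⟨u', by simp [hu']⟩)
      · simp at hu'
  have h1L : ([1] : List (Fin 2)) ∉ L := by
    apply hout
    · exact Or.inr ⟨[], rfl⟩
    · rintro (⟨u, hu⟩ | ⟨u, v, hb, he⟩)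
      · simp at hu
      · simp at he
  have h11L : ([1, 1] : List (Fin 2)) ∉ L := by
    apply hout
    · exact Or.inr ⟨[1], rfl⟩
    · rintro (⟨u, hu⟩ | ⟨u, v, hb, he⟩)
      · simp at hu
      · simp at he
        exact blocks_ne2 u v hb he.symm
  have h10L : ([1, 0] : List (Fin 2)) ∈ L :=
    hBL (Or.inr ⟨[], [], Blocks.nil, rfl⟩)
  have h1011L : ([1, 0, 1, 1] : List (Fin 2)) ∈ L :=
    hBL (Or.inr ⟨[], [1, 1], Blocks.nil, rfl⟩)
  have h11011L : ([1, 1, 0, 1, 1] : List (Fin 2)) ∉ L := by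
    apply hout
    · exact Or.inr ⟨[1, 0, 1, 1], rfl⟩
    · rintro (⟨u, hu⟩ | ⟨u, v, hb, he⟩)
      · simp at hu
      · simp at he
        exact blocks_ne3 u v hb he.symm
  -- DFA reasoning
  have keyE : ∀ x y z : List (Fin 2), M.eval x = M.eval y →
      M.eval (x ++ z) = M.eval (y ++ z) := by
    intro x y z hxy
    simp only [DFA.eval, DFA.evalFrom_of_append]
    exact congrArg (M.evalFrom · z) hxy
  have keyA : ∀ x y : List (Fin 2), M.eval x = M.eval y → (x ∈ L ↔ y ∈ L) := by
    intro x y hxy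
    simp only [hL, Set.mem_setOf_eq, DFA.mem_accepts, hxy]
  have q01 : M.eval [0] ≠ M.eval [1] := fun he => h1L ((keyA _ _ he).mp h0L)
  have q02 : M.eval [0] ≠ M.eval [1, 1] := fun he => h11L ((keyA _ _ he).mp h0L)
  have q12 : M.eval [1] ≠ M.eval [1, 1] := by
    intro he
    have := keyE _ _ [0, 1, 1] he
    exact h11011L ((keyA _ _ this).mp h1011L)
  -- q10 facts
  have q10acc : M.eval [1, 0] ≠ M.eval [1] := fun he => h1L ((keyA _ _ he).mp h10L)
  have q10b : M.eval [1, 0] ≠ M.eval [1, 1] := fun he => h11L ((keyA _ _ he).mp h10L)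
  by_contra hcard
  push_neg at hcard
  have card3 : ¬ (4 ≤ Fintype.card σ) := by omega
  rcases eq_or_ne (M.eval []) (M.eval [0]) with he0 | he0
  · -- qe = q0 : then q10 must be qe, contradiction via 1011
    rcases eq_or_ne (M.eval []) (M.eval [1, 0]) with he10 | he10
    · have h1 : M.eval [1, 0, 1, 1] = M.eval [1, 1] := by
        have := keyE _ _ [1, 1] he10.symm
        simpa using this
      exact h11L ((keyA _ _ h1).mp h1011L)
    · exact card3 (four_distinct _ _ _ _ (he0 ▸ q01) (he0 ▸ q02) he10 q12
        (Ne.symm q10acc) (Ne.symm q10b))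
  · rcases eq_or_ne (M.eval []) (M.eval [1]) with he1 | he1
    · -- qe = q1 : then q1 = q11
      have h1 : M.eval [1] = M.eval [1, 1] := by
        have := keyE _ _ [1] he1
        simpa using this
      exact q12 h1
    · rcases eq_or_ne (M.eval []) (M.eval [1, 1]) with he2 | he2
      · -- qe = q11 : then q10 must be q0
        rcases eq_or_ne (M.eval [1, 0]) (M.eval [0]) with he10 | he10
        · have h1 : M.eval [1, 0, 1, 1] = M.eval [0, 1, 1] := by
            have := keyE _ _ [1, 1] he10
            simpa using this
          have h2 : M.eval [0, 1, 1] = M.eval [1, 1, 0, 1, 1] := by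
            have := keyE _ _ [0, 1, 1] he2
            simpa using this
          exact h11011L ((keyA _ _ (h1.trans h2)).mp h1011L)
        · exact card3 (four_distinct _ _ _ _ q01 q02 (Ne.symm he10) q12
            (Ne.symm q10acc) (Ne.symm q10b))
      · exact card3 (four_distinct _ _ _ _ he0 he1 he2 q01 q02 q12)
end

section
/- There exist a two-letter alphabet Σ and regular languages S, B ⊆ Σ* with B ⊆ S and B extension closed with respect to S, together with a DFA M with 3 states whose accepted language is a failure explanation for S and B, such that every DFA whose accepted language is an early detection failure explanation for S and B has strictly more than 3 states. Hence a minimal failure-explanation DFA can be strictly smaller than every early-detection failure-explanation DFA. -/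
/-- `B` is extension closed with respect to `S`. -/
def ExtClosedWrt {α : Type} (S B : Set (List α)) : Prop :=
  ∀ w ∈ B, ∀ u : List α, w ++ u ∈ S → w ++ u ∈ B

/-- `L` is a regular language: some DFA with finitely many states accepts exactly `L`. -/
def Regular {α : Type} (L : Set (List α)) : Prop :=
  ∃ (σ : Type) (_ : Fintype σ) (M : DFA α σ), ∀ w, w ∈ M.accepts ↔ w ∈ L

/-!
Take `S = {a, b, aab, aaab}` and `B = {aaab}`. The words of even length form a failure
explanation, recognised with two states. An early detection failure explanation must in addition
contain `aaa`, a prefix of `aaab` but of no word of `S \ B`. Knowing that `aaa` and `aaab` are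
accepted while `a`, `b` and `aab` are rejected separates the prefixes `ε, a, aa, aaa` pairwise, so
they have four distinct left quotients, and by Myhill–Nerode every DFA accepting such a language
has at least four states.
-/

theorem pref_eq_setOf_exists_prefix {α : Type} (L : Set (List α)) :
    Pref L = {w | ∃ v ∈ L, w <+: v} := by
  ext w
  simp only [Pref, Set.mem_ofPred_eq, List.IsPrefix]
  exact ⟨fun ⟨u, hu⟩ => ⟨_, hu, u, rfl⟩, fun ⟨_, hv, u, hu⟩ => ⟨u, hu ▸ hv⟩⟩

theorem extClosedWrt_iff {α : Type} (S B : Set (List α)) :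
    ExtClosedWrt S B ↔ ∀ w ∈ B, ∀ v ∈ S, w <+: v → v ∈ B := by
  simp only [ExtClosedWrt, List.IsPrefix]
  exact ⟨fun h w hw _ hv ⟨u, hu⟩ => hu ▸ h w hw u (hu ▸ hv),
    fun h w hw u hu => h w hw _ hu ⟨u, rfl⟩⟩

theorem isFE_iff {α : Type} (S B L : Set (List α)) :
    IsFE S B L ↔ B ⊆ L ∧ Disjoint (S \ B) L := by
  rw [IsFE, Set.disjoint_iff_inter_eq_empty, Set.inter_comm]

theorem regular_of_isRegular {α : Type} {L : Language α} (h : L.IsRegular) : Regular L := by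
  obtain ⟨σ, hσ, M, rfl⟩ := h
  exact ⟨σ, hσ, M, fun _ => Iff.rfl⟩

theorem Language.IsRegular.of_finite {α : Type} {L : Language α}
    (h : (L : Set (List α)).Finite) : L.IsRegular := by
  have hsuffixes : (⋃ w ∈ L, {y | y <:+ w}).Finite :=
    h.biUnion fun w _ => by simpa only [List.mem_tails] using w.tails.finite_toSet
  refine .of_finite_range_leftQuotient (hsuffixes.finite_subsets.subset ?_)
  rintro _ ⟨x, rfl⟩ y hy
  exact Set.mem_biUnion hy (List.suffix_append x y)

theorem DFA.card_le_of_injective_leftQuotient {α σ ι : Type*} [Fintype σ] [Fintype ι]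
    (M : DFA α σ) {x : ι → List α} (hx : Function.Injective (M.accepts.leftQuotient ∘ x)) :
    Fintype.card ι ≤ Fintype.card σ := by
  rw [Language.leftQuotient_accepts, Function.comp_assoc] at hx
  exact Fintype.card_le_of_injective _ hx.of_comp

theorem Language.injective_leftQuotient_comp {α ι : Type*} [LinearOrder ι] {L : Language α}
    {I O : Set (List α)} (hI : I ⊆ L) (hO : Disjoint O L) {x : ι → List α}
    (hsep : ∀ i j, i < j → ∃ u, x j ++ u ∈ I ∧ x i ++ u ∈ O) :
    Function.Injective (L.leftQuotient ∘ x) := by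
  have hne : ∀ i j, i < j → L.leftQuotient (x i) ≠ L.leftQuotient (x j) := by
    intro i j hij heq
    obtain ⟨u, hj, hi⟩ := hsep i j hij
    have hu : u ∈ L.leftQuotient (x i) := heq ▸ hI hj
    exact hO.notMem_of_mem_left hi hu
  intro i j h
  by_contra hij
  rcases lt_or_gt_of_ne hij with hij | hji
  · exact hne i j hij h
  · exact hne j i hji h.symm

inductive Letter
  | a | b
  deriving DecidableEq

instance : Fintype Letter := ⟨{.a, .b}, fun x => by cases x <;> simp⟩

open Letter

def S₀ : Finset (List Letter) := {[a], [b], [a, a, b], [a, a, a, b]}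

def B₀ : Finset (List Letter) := {[a, a, a, b]}

def evenLengthDFA : DFA Letter (Fin 3) where
  step s _ := if s = 0 then 1 else 0
  start := 0
  accept := {s | s = 0}

theorem extClosedWrt_S₀_B₀ : ExtClosedWrt (S₀ : Set (List Letter)) B₀ := by
  rw [extClosedWrt_iff]
  simp only [Finset.mem_coe]
  decide

theorem isFE_evenLengthDFA : IsFE (S₀ : Set (List Letter)) B₀ {w | w ∈ evenLengthDFA.accepts} := by
  rw [isFE_iff, ← Finset.coe_sdiff, Set.disjoint_left]
  simp only [Finset.mem_coe, Set.subset_def, Set.mem_ofPred_eq, DFA.mem_accepts, evenLengthDFA]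
  decide

theorem aaa_mem_of_isEDFE {L : Set (List Letter)} (h : IsEDFE (S₀ : Set (List Letter)) B₀ L) :
    [a, a, a] ∈ L := by
  refine h.2 _ ?_ ?_ <;>
    simp only [← Finset.coe_sdiff, pref_eq_setOf_exists_prefix, Finset.mem_coe, Set.mem_ofPred_eq]
  all_goals decide

theorem four_le_card_of_isEDFE {τ : Type} [Fintype τ] (N : DFA Letter τ)
    (hN : IsEDFE (S₀ : Set (List Letter)) B₀ {w | w ∈ N.accepts}) : 4 ≤ Fintype.card τ := by
  let I : Finset (List Letter) := {[a, a, a], [a, a, a, b]}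
  have hI : (I : Set (List Letter)) ⊆ N.accepts := by
    intro w hw
    rcases Finset.mem_insert.1 hw with rfl | hw
    · exact aaa_mem_of_isEDFE hN
    · exact hN.1.1 hw
  have hO : Disjoint ((S₀ \ B₀ : Finset (List Letter)) : Set (List Letter)) N.accepts := by
    rw [Finset.coe_sdiff]
    exact ((isFE_iff _ _ _).1 hN.1).2
  have hsep : ∀ i j : Fin 4, i < j → ∃ u ∈ [[], [b], [a], [a, b], [a, a, b]],
      List.replicate j a ++ u ∈ I ∧ List.replicate i a ++ u ∈ S₀ \ B₀ := by
    decide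
  simpa only [Fintype.card_fin] using N.card_le_of_injective_leftQuotient
    (Language.injective_leftQuotient_comp hI hO fun i j hij => (hsep i j hij).imp fun _ => And.right)


/-- There is a two-letter alphabet with regular `S`, `B` (with `B ⊆ S` extension closed
w.r.t. `S`) such that some 3-state DFA accepts a failure explanation, while every DFA
accepting an early detection failure explanation has strictly more than 3 states. -/
theorem stmt13 :
    ∃ (α : Type) (instα : Fintype α), @Fintype.card α instα = 2 ∧
      ∃ S B : Set (List α),
        B ⊆ S ∧ ExtClosedWrt S B ∧ Regular S ∧ Regular B ∧
        (∃ M : DFA α (Fin 3), IsFE S B {w | w ∈ M.accepts}) ∧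
        (∀ (τ : Type) [Fintype τ], ∀ N : DFA α τ,
          IsEDFE S B {w | w ∈ N.accepts} → 3 < Fintype.card τ) := by
  refine ⟨Letter, inferInstance, rfl, S₀, B₀, Finset.coe_subset.2 (by decide), extClosedWrt_S₀_B₀,
    regular_of_isRegular (.of_finite S₀.finite_toSet),
    regular_of_isRegular (.of_finite B₀.finite_toSet), ⟨evenLengthDFA, isFE_evenLengthDFA⟩,
    fun _ _ N hN => four_le_card_of_isEDFE N hN⟩
end

section
/- Over the two-letter alphabet Σ = {0,1}, let S = {0}{0}Σ* ∪ {1}Σ* and B = {0}{0}Σ* ∪ {1}·({1}Σ)*·{0}·Σ*, and take the test space T = Σ*. Then the language L₁ = (Σ·{1})*·Σ·{0}·Σ* is an eventual failure explanation for this instance: B ⊆ L₁ and L₁ contains no word that may pass. -/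
/-- A test prefix `w` may pass (with respect to `S` and `B`). -/
def MayPass {α : Type} (S B : Set (List α)) (w : List α) : Prop :=
  w ∈ Pref S ∧
    ((∃ u : List α, w ++ u ∈ S \ B ∧ ∀ v : List α, v ≠ [] → w ++ u ++ v ∉ S) ∨
     (∃ us : ℕ → List α, (∀ i, us i ≠ []) ∧
        ∀ i : ℕ, w ++ (List.flatten (((List.range (i + 1)).map us))) ∈ S \ B))

/-- `L₁ = (Σ·{1})*·Σ·{0}·Σ*`. -/
def L1 : Set (List (Fin 2)) :=
  {x | ∃ u a v, EndBlocks u ∧ x = u ++ a :: 0 :: v}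

lemma lem1 : ∀ {u}, EndBlocks u → ∀ (a : Fin 2) (v : List (Fin 2)),
    ∃ z, Blocks z ∧ (1 : Fin 2) :: (u ++ a :: 0 :: v) = z ++ 0 :: v := by
  intro u hu
  induction hu with
  | nil => intro a v; exact ⟨[1, a], Blocks.cons a [] Blocks.nil, rfl⟩
  | cons b u' hu' ih =>
      intro a v
      obtain ⟨z, hz, he⟩ := ih a v
      exact ⟨1 :: b :: z, Blocks.cons b z hz, by simp [he]⟩

lemma lem2 : ∀ {z}, Blocks z → ∀ (c : Fin 2) (v : List (Fin 2)),
    ∃ e a, EndBlocks e ∧ c :: (z ++ 0 :: v) = e ++ a :: 0 :: v := by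
  intro z hz
  induction hz with
  | nil => intro c v; exact ⟨[], c, EndBlocks.nil, rfl⟩
  | cons b z' hz' ih =>
      intro c v
      obtain ⟨e, a, he, heq⟩ := ih b v
      exact ⟨c :: 1 :: e, a, EndBlocks.cons c e he, by simp [heq]⟩

lemma lem3 : ∀ w ∈ L1, ∀ x, w ++ x ∈ Sl → w ++ x ∈ Bl := by
  rintro w ⟨u, a, v, hu, rfl⟩ x hS
  cases hu with
  | nil =>
      fin_cases a
      · exact Or.inl ⟨v ++ x, by simp⟩
      · exact Or.inr ⟨[], v ++ x, Blocks.nil, by simp⟩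
  | cons b u' hu' =>
      rcases hS with ⟨y, hy⟩ | ⟨y, hy⟩
      · simp at hy
      · simp at hy
        obtain ⟨z, hz, he⟩ := lem1 hu' a (v ++ x)
        refine Or.inr ⟨z, v ++ x, hz, ?_⟩
        simp only [List.cons_append, List.append_assoc, List.cons_append] at *
        rw [hy.1]
        simp [he]

/-- With the test space `T = Σ*`, the language `L₁` is an eventual failure
explanation: `B ⊆ L₁` and no word of `L₁` may pass. -/
theorem stmt15 : Bl ⊆ L1 ∧ ∀ w ∈ L1, ¬ MayPass Sl Bl w := by
  constructor
  · rintro x (⟨u, rfl⟩ | ⟨z, v, hz, rfl⟩)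
    · exact ⟨[], 0, u, EndBlocks.nil, rfl⟩
    · obtain ⟨e, a, he, heq⟩ := lem2 hz 1 v
      exact ⟨e, a, v, he, heq⟩
  · rintro w hw ⟨-, ⟨u, ⟨hS, hB⟩, -⟩ | ⟨us, -, h⟩⟩
    · exact hB (lem3 w hw u hS)
    · obtain ⟨hS, hB⟩ := h 0
      exact hB (lem3 w hw _ hS)
end

section
/- Over the two-letter alphabet Σ = {0,1}, let S = {0}{0}Σ* ∪ {1}Σ* and B = {0}{0}Σ* ∪ {1}·({1}Σ)*·{0}·Σ*, and take the test space T = Σ*. Then every deterministic finite automaton over Σ with finitely many states whose accepted language is an eventual failure explanation for this instance has at least 3 states. -/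
/-- With the test space `T = Σ*`, `L` is an eventual failure explanation for
`S` and `B` if `B ⊆ L` and no word of `L` may pass. -/
def IsEFE {α : Type} (S B L : Set (List α)) : Prop :=
  B ⊆ L ∧ ∀ w ∈ L, ¬ MayPass S B w

lemma flatten_ones (n : ℕ) :
    List.flatten ((List.range n).map (fun _ => ([1,1] : List (Fin 2)))) =
      List.replicate (2*n) (1 : Fin 2) := by
  induction n with
  | zero => simp
  | succ k ih =>
    rw [List.range_succ, List.map_append, List.flatten_append, ih]
    have : 2 * (k+1) = 2*k + 2 := by ring
    rw [this, List.replicate_add]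
    simp [List.replicate]

lemma zero_not_mem_rep (n : ℕ) : (0 : Fin 2) ∉ List.replicate n (1 : Fin 2) := by
  simp [List.mem_replicate]

lemma rep_ne (n : ℕ) (u v : List (Fin 2)) :
    List.replicate n (1 : Fin 2) ≠ u ++ 0 :: v := by
  intro he
  have : (0 : Fin 2) ∈ List.replicate n (1 : Fin 2) := by
    rw [he]; simp
  exact zero_not_mem_rep n this

lemma maypass_ones (w : List (Fin 2))
    (hw : ∀ i : ℕ, w ++ List.replicate (2*(i+1)) (1 : Fin 2) ∈ Sl \ Bl) :
    MayPass Sl Bl w := by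
  constructor
  · exact ⟨List.replicate (2*1) 1, (hw 0).1⟩
  · right
    refine ⟨fun _ => [1,1], fun i => by simp, fun i => ?_⟩
    rw [flatten_ones]
    exact hw i

lemma ones_in : ∀ m : ℕ, (1 : Fin 2) :: List.replicate m (1 : Fin 2) ∈ Sl \ Bl := by
  intro m
  constructor
  · exact Or.inr ⟨_, rfl⟩
  · rintro (⟨u, hu⟩ | ⟨u, v, hb, he⟩)
    · exact absurd (List.cons.injEq .. ▸ hu).1 (by decide)
    · injection he with _ he2
      exact rep_ne m u v he2

lemma word110_in (i : ℕ) :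
    ([1,1,0] : List (Fin 2)) ++ List.replicate (2*(i+1)) (1 : Fin 2) ∈ Sl \ Bl := by
  constructor
  · exact Or.inr ⟨_, rfl⟩
  · rintro (⟨u, hu⟩ | ⟨u, v, hb, he⟩)
    · simp only [List.cons_append, List.cons.injEq] at hu
      exact absurd hu.1 (by decide)
    · simp only [List.cons_append, List.cons.injEq] at he
      have he2 := he.2
      cases hb with
      | nil =>
        simp only [List.nil_append, List.cons.injEq] at he2
        exact absurd he2.1 (by decide)
      | cons a w hw =>
        simp only [List.cons_append, List.cons.injEq] at he2
        exact rep_ne _ w v he2.2.2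

/-- Every DFA whose language is an eventual failure explanation for this instance
has at least 3 states. -/
theorem stmt16 (σ : Type) [Fintype σ] (M : DFA (Fin 2) σ)
    (h : IsEFE Sl Bl {w | w ∈ M.accepts}) : 3 ≤ Fintype.card σ := by
  obtain ⟨hB, hP⟩ := h
  have f1 : ([0,0] : List (Fin 2)) ∈ M.accepts := hB (Or.inl ⟨[], rfl⟩)
  have f2 : ([1,0] : List (Fin 2)) ∈ M.accepts :=
    hB (Or.inr ⟨[], [], Blocks.nil, rfl⟩)
  have f3 : ([1] : List (Fin 2)) ∉ M.accepts := by
    intro hc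
    refine hP _ hc (maypass_ones _ (fun i => ?_))
    exact ones_in (2*(i+1))
  have f4 : ([1,1] : List (Fin 2)) ∉ M.accepts := by
    intro hc
    refine hP _ hc (maypass_ones _ (fun i => ?_))
    have := ones_in (2*(i+1) + 1)
    simpa [List.replicate_succ] using this
  have f5 : ([1,1,0] : List (Fin 2)) ∉ M.accepts := by
    intro hc
    exact hP _ hc (maypass_ones _ word110_in)
  have h3 : (2 : ℕ) < Fintype.card σ := by
    rw [Fintype.two_lt_card_iff]
    refine ⟨M.eval [0,0], M.eval [1], M.eval [1,1], ?_, ?_, ?_⟩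
    · intro he
      exact f3 (by rwa [DFA.mem_accepts, ← he, ← DFA.mem_accepts])
    · intro he
      exact f4 (by rwa [DFA.mem_accepts, ← he, ← DFA.mem_accepts])
    · intro he
      have key : ∀ w : List (Fin 2), M.eval (w ++ [0]) = M.evalFrom (M.eval w) [0] :=
        fun w => M.evalFrom_of_append M.start w [0]
      apply f5
      have h2 : M.evalFrom (M.eval [1]) [0] ∈ M.accept := by
        have := f2
        rw [DFA.mem_accepts] at this
        rwa [show ([1,0] : List (Fin 2)) = [1] ++ [0] from rfl, key] at this
      rw [DFA.mem_accepts,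
        show ([1,1,0] : List (Fin 2)) = [1,1] ++ [0] from rfl, key, ← he]
      exact h2
  omega
end
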